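/- arXiv:2508.21753 — 4 statements merged into one kernel-verified Lean document; each statement's English description precedes it below -/
import Mathlib

section
/- Let α* = μ_B/μ_N and assume α* ≤ A_max. For each capacity M > 0, run the inventory process under the static policy A_t = α* for all t. Then there exist constants 0 < c ≤ C < ∞ and M₀ > 0, depending only on the distributions of B_1 and N_1 (not on M), such that for every M ≥ M₀, almost surely c/M ≤ W̄ ≤ C/M and c/M ≤ V̄ ≤ C/M. In particular, for any per-unit costs h, b > 0 the inefficiency h·W̄ + b·V̄ is Θ(1/M) as M → ∞. -/
/-!
Write `X_t = B_t - α* N_t`: an i.i.d., bounded, centred sequence whose variance `σ²` is positive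
because `B` and `N` are independent and `Var B > 0`. The inventory is the walk with increments `X_t`
reflected at `0` and `M`, so `S_{t+1} = S_t + X_t - W_{t+1} + V_{t+1}`. Telescoping this identity
and its square (the Lyapunov function `S²`) gives
  `∑ W - ∑ V = ∑ X - (S_T - S_0)`,
  `2M ∑ W + ∑ (W² + V²) = 2 ∑ S_{t-1} X_t + ∑ X² + S_0² - S_T²`.
The sums `∑ X`, `∑ (X² - σ²)` and `∑ S_{t-1} X_t` have bounded, pairwise orthogonal terms
(`S_{t-1}` depends only on the past, `X_t` is independent of it and centred), so divided by `T` they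
tend to `0` almost surely. Since `0 ≤ W, V ≤ K := Bmax + Nmax α*`, we have `W² + V² ≤ K (W + V)`,
and the two identities pin the long-run averages of `W` and `V` between `σ²/(2(M+K))` and `σ²/(2M)`.
-/

open MeasureTheory ProbabilityTheory Filter Set Real

noncomputable section

/-- Clamp a real number to the interval `[0, M]`. -/
def clamp (M x : ℝ) : ℝ := min (max x 0) M

/-- The inventory process: `inv M S0 B N A t` is the inventory level after `t` steps,
starting from `S0`, with budgets `B`, demands `N` and allocations `A`.
(Indexing: the paper's `B_t, N_t, A_t, S_t` for `t ≥ 1` correspond to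
`B (t-1), N (t-1), A (t-1), inv … t` here.) -/
def inv {Ω : Type*} (M S0 : ℝ) (B N A : ℕ → Ω → ℝ) : ℕ → Ω → ℝ
  | 0 => fun _ => S0
  | t + 1 => fun ω => clamp M (inv M S0 B N A t ω + B t ω - N t ω * A t ω)

/-- Overflow in the step from time `t` to time `t+1` (the paper's `W_{t+1}`). -/
def ovf {Ω : Type*} (M S0 : ℝ) (B N A : ℕ → Ω → ℝ) (t : ℕ) (ω : Ω) : ℝ :=
  max (inv M S0 B N A t ω + B t ω - N t ω * A t ω - M) 0

/-- Stockout in the step from time `t` to time `t+1` (the paper's `V_{t+1}`). -/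
def sko {Ω : Type*} (M S0 : ℝ) (B N A : ℕ → Ω → ℝ) (t : ℕ) (ω : Ω) : ℝ :=
  max (-(inv M S0 B N A t ω + B t ω - N t ω * A t ω)) 0

/-- Long-run average overflow `W̄`. -/
def Wbar {Ω : Type*} (M S0 : ℝ) (B N A : ℕ → Ω → ℝ) (ω : Ω) : ℝ :=
  Filter.limsup (fun T : ℕ => (∑ t ∈ Finset.range T, ovf M S0 B N A t ω) / T) atTop

/-- Long-run average stockout `V̄`. -/
def Vbar {Ω : Type*} (M S0 : ℝ) (B N A : ℕ → Ω → ℝ) (ω : Ω) : ℝ :=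
  Filter.limsup (fun T : ℕ => (∑ t ∈ Finset.range T, sko M S0 B N A t ω) / T) atTop

/-- `B, N` are i.i.d. across time (as a pair process), with the two sequences
independent of each other, and everything measurable. -/
def IsIIDPair {Ω : Type*} [MeasurableSpace Ω] (μ : Measure Ω) (B N : ℕ → Ω → ℝ) : Prop :=
  (∀ t, Measurable (B t)) ∧ (∀ t, Measurable (N t)) ∧
  iIndepFun (fun t ω => (B t ω, N t ω)) μ ∧
  (∀ t, IdentDistrib (fun ω => (B t ω, N t ω)) (fun ω => (B 0 ω, N 0 ω)) μ μ) ∧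
  (∀ t, IndepFun (B t) (N t) μ)

/-- `N` takes values in `{0, 1, …, Nmax}`. -/
def NatValued {Ω : Type*} (N : ℕ → Ω → ℝ) (Nmax : ℕ) : Prop :=
  ∀ t ω, ∃ k : ℕ, k ≤ Nmax ∧ N t ω = k

open Topology

lemma continuous_clamp (M : ℝ) : Continuous (clamp M) :=
  (continuous_id.max continuous_const).min continuous_const

lemma clamp_mem_Icc {M : ℝ} (hM : 0 ≤ M) (u : ℝ) : clamp M u ∈ Icc 0 M :=
  ⟨le_min (le_max_right u 0) hM, min_le_right _ _⟩

lemma clamp_eq_sub_add {M : ℝ} (hM : 0 ≤ M) (u : ℝ) :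
    clamp M u = u - max (u - M) 0 + max (-u) 0 := by
  simp only [clamp, min_def, max_def]
  split_ifs <;> linarith

lemma clamp_sq {M : ℝ} (hM : 0 ≤ M) (u : ℝ) :
    clamp M u ^ 2 = u ^ 2 - 2 * M * max (u - M) 0 - max (u - M) 0 ^ 2 - max (-u) 0 ^ 2 := by
  simp only [clamp, min_def, max_def]
  split_ifs <;> first | ring1 | nlinarith

def cesaroMean (u : ℕ → ℝ) (n : ℕ) : ℝ := (∑ t ∈ Finset.range n, u t) / n

lemma limsup_mem_Icc_of_eventually_le {a l u : ℕ → ℝ} {L U : ℝ} (hl : Tendsto l atTop (𝓝 L))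
    (hu : Tendsto u atTop (𝓝 U)) (hla : ∀ᶠ n in atTop, l n ≤ a n)
    (hau : ∀ᶠ n in atTop, a n ≤ u n) : limsup a atTop ∈ Icc L U := by
  have hbdd : IsBoundedUnder (· ≤ ·) atTop a := hu.isBoundedUnder_le.mono_le hau
  have hcobdd : IsCoboundedUnder (· ≤ ·) atTop a :=
    (hl.isBoundedUnder_ge.mono_ge hla).isCoboundedUnder_le
  constructor
  · rw [← hl.limsup_eq]
    exact limsup_le_limsup hla hl.isBoundedUnder_ge.isCoboundedUnder_le hbdd
  · rw [← hu.limsup_eq]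
    exact limsup_le_limsup hau hcobdd hu.isBoundedUnder_le

lemma abs_cesaroMean_le_sqrt {y : ℕ → ℝ} {K : ℝ} (hy : ∀ t, |y t| ≤ K) (m : ℕ) :
    |cesaroMean y m| ≤ |cesaroMean y (m.sqrt ^ 2)| + 2 * K / m.sqrt := by
  have hK : 0 ≤ K := (abs_nonneg _).trans (hy 0)
  have hms := Nat.lt_succ_sqrt' m
  have hsm : m.sqrt ^ 2 ≤ m := Nat.sqrt_le' m
  set s := m.sqrt
  replace hms : m - s ^ 2 ≤ 2 * s := by
    rw [Nat.succ_eq_add_one, add_sq] at hms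
    omega
  obtain hs | hs := s.eq_zero_or_pos
  · have hm : m = 0 := by simpa [hs] using hsm.antisymm' (by omega)
    simp [hm, hs, cesaroMean]
  have hs' : (0 : ℝ) < s := by exact_mod_cast hs
  have hIco : |∑ t ∈ Finset.Ico (s ^ 2) m, y t| ≤ 2 * s * K := by
    refine (Finset.abs_sum_le_sum_abs _ _).trans ((Finset.sum_le_card_nsmul _ _ K
      fun t _ => hy t).trans ?_)
    rw [Nat.card_Ico, nsmul_eq_mul]
    exact mul_le_mul_of_nonneg_right (by exact_mod_cast hms) hK
  have hm : ((s ^ 2 : ℕ) : ℝ) ≤ m := by exact_mod_cast hsm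
  simp only [cesaroMean, abs_div, Nat.abs_cast, ← Finset.sum_range_add_sum_Ico y hsm]
  calc |∑ t ∈ Finset.range (s ^ 2), y t + ∑ t ∈ Finset.Ico (s ^ 2) m, y t| / m
      ≤ (|∑ t ∈ Finset.range (s ^ 2), y t| + 2 * s * K) / ((s ^ 2 : ℕ) : ℝ) :=
        div_le_div₀ (by positivity) ((abs_add_le _ _).trans (by linarith)) (by positivity) hm
    _ = |∑ t ∈ Finset.range (s ^ 2), y t| / ((s ^ 2 : ℕ) : ℝ) + 2 * K / s := by
        push_cast
        field_simp

lemma abs_cesaroMean_le {y : ℕ → ℝ} {K : ℝ} (hy : ∀ t, |y t| ≤ K) (n : ℕ) :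
    |cesaroMean y n| ≤ K := by
  obtain rfl | hn := n.eq_zero_or_pos
  · simpa [cesaroMean] using (abs_nonneg _).trans (hy 0)
  rw [cesaroMean, abs_div, Nat.abs_cast, div_le_iff₀ (by exact_mod_cast hn)]
  refine (Finset.abs_sum_le_sum_abs _ _).trans
    ((Finset.sum_le_card_nsmul _ _ K fun t _ => hy t).trans ?_)
  simp [mul_comm]

lemma tendsto_cesaroMean_of_tendsto_sq {y : ℕ → ℝ} {K : ℝ} (hy : ∀ t, |y t| ≤ K)
    (h : Tendsto (fun n => cesaroMean y (n ^ 2)) atTop (𝓝 0)) :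
    Tendsto (cesaroMean y) atTop (𝓝 0) := by
  have hsqrt : Tendsto Nat.sqrt atTop atTop :=
    tendsto_atTop_atTop.2 fun b => ⟨b * b, fun m hm => Nat.le_sqrt.2 hm⟩
  refine squeeze_zero_norm (fun m => abs_cesaroMean_le_sqrt hy m) ?_
  simpa using (h.abs.comp hsqrt).add ((tendsto_const_div_atTop_nhds_zero_nat (2 * K)).comp hsqrt)

section ReflectedWalk

variable {M K σ2 : ℝ} {S x W V : ℕ → ℝ}

lemma mem_Icc_of_clamp (hM : 0 ≤ M) (hS0 : S 0 ∈ Icc 0 M)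
    (hS : ∀ t, S (t + 1) = clamp M (S t + x t)) : ∀ t, S t ∈ Icc 0 M
  | 0 => hS0
  | t + 1 => hS t ▸ clamp_mem_Icc hM _

lemma sum_sub_sum_eq_of_clamp (hM : 0 ≤ M) (hS : ∀ t, S (t + 1) = clamp M (S t + x t))
    (hW : ∀ t, W t = max (S t + x t - M) 0) (hV : ∀ t, V t = max (-(S t + x t)) 0) (n : ℕ) :
    ∑ t ∈ Finset.range n, W t - ∑ t ∈ Finset.range n, V t
      = ∑ t ∈ Finset.range n, x t - (S n - S 0) := by
  induction n with
  | zero => simp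
  | succ n ih =>
    have hstep := hS n
    rw [clamp_eq_sub_add hM, ← hW, ← hV] at hstep
    simp only [Finset.sum_range_succ]
    linarith

lemma energy_eq_of_clamp (hM : 0 ≤ M) (hS : ∀ t, S (t + 1) = clamp M (S t + x t))
    (hW : ∀ t, W t = max (S t + x t - M) 0) (hV : ∀ t, V t = max (-(S t + x t)) 0) (n : ℕ) :
    2 * M * ∑ t ∈ Finset.range n, W t + ∑ t ∈ Finset.range n, (W t ^ 2 + V t ^ 2)
      = 2 * ∑ t ∈ Finset.range n, S t * x t + ∑ t ∈ Finset.range n, x t ^ 2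
        + S 0 ^ 2 - S n ^ 2 := by
  induction n with
  | zero => simp
  | succ n ih =>
    have hstep := congrArg (· ^ 2) (hS n)
    simp only [clamp_sq hM, ← hW, ← hV] at hstep
    simp only [Finset.sum_range_succ]
    linarith

lemma sum_sq_le_of_clamp (hM : 0 ≤ M) (hS0 : S 0 ∈ Icc 0 M)
    (hS : ∀ t, S (t + 1) = clamp M (S t + x t))
    (hW : ∀ t, W t = max (S t + x t - M) 0) (hV : ∀ t, V t = max (-(S t + x t)) 0)
    (hx : ∀ t, |x t| ≤ K) (n : ℕ) :
    ∑ t ∈ Finset.range n, (W t ^ 2 + V t ^ 2)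
      ≤ K * (∑ t ∈ Finset.range n, W t + ∑ t ∈ Finset.range n, V t) := by
  rw [← Finset.sum_add_distrib, Finset.mul_sum]
  refine Finset.sum_le_sum fun t _ => ?_
  obtain ⟨hS0t, hSMt⟩ := mem_Icc_of_clamp hM hS0 hS t
  obtain ⟨hxl, hxu⟩ := abs_le.mp (hx t)
  have hW0 : 0 ≤ W t := hW t ▸ le_max_right _ _
  have hV0 : 0 ≤ V t := hV t ▸ le_max_right _ _
  have hWK : W t ≤ K := hW t ▸ max_le (by linarith) (by linarith)
  have hVK : V t ≤ K := hV t ▸ max_le (by linarith) (by linarith)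
  nlinarith

lemma limsup_mem_Icc_of_energy_balance {a b q d e : ℕ → ℝ} (hM : 0 < M) (hK : 0 ≤ K)
    (hd : Tendsto d atTop (𝓝 0)) (he : Tendsto e atTop (𝓝 σ2))
    (hba : ∀ n, b n = a n - d n) (hq0 : ∀ n, 0 ≤ q n) (hq : ∀ n, q n ≤ K * (a n + b n))
    (hae : ∀ᶠ n in atTop, 2 * M * a n + q n = e n) :
    limsup a atTop ∈ Icc (σ2 / (2 * (M + K))) (σ2 / (2 * M)) ∧
      limsup b atTop ∈ Icc (σ2 / (2 * (M + K))) (σ2 / (2 * M)) := by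
  have hup : ∀ᶠ n in atTop, a n ≤ e n / (2 * M) := by
    filter_upwards [hae] with n hn
    rw [le_div_iff₀ (by positivity)]
    linarith [hq0 n]
  have hlo : ∀ᶠ n in atTop, (e n + K * d n) / (2 * M + 2 * K) ≤ a n := by
    filter_upwards [hae] with n hn
    rw [div_le_iff₀ (by positivity)]
    nlinarith [hq n, hba n]
  have hl : Tendsto (fun n => (e n + K * d n) / (2 * M + 2 * K)) atTop
      (𝓝 (σ2 / (2 * (M + K)))) := by
    convert (he.add (hd.const_mul K)).div_const (2 * M + 2 * K) using 2
    ring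
  have hu : Tendsto (fun n => e n / (2 * M)) atTop (𝓝 (σ2 / (2 * M))) := he.div_const _
  refine ⟨limsup_mem_Icc_of_eventually_le hl hu hlo hup, ?_⟩
  simp only [funext hba]
  exact limsup_mem_Icc_of_eventually_le (by simpa using hl.sub hd) (by simpa using hu.sub hd)
    (hlo.mono fun n hn => by linarith) (hup.mono fun n hn => by linarith)

theorem limsup_cesaroMean_mem_Icc_of_clamp (hM : 0 < M) (hS0 : S 0 ∈ Icc 0 M)
    (hS : ∀ t, S (t + 1) = clamp M (S t + x t))
    (hW : ∀ t, W t = max (S t + x t - M) 0) (hV : ∀ t, V t = max (-(S t + x t)) 0)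
    (hx : ∀ t, |x t| ≤ K)
    (hx1 : Tendsto (cesaroMean x) atTop (𝓝 0))
    (hx2 : Tendsto (cesaroMean fun t => x t ^ 2 - σ2) atTop (𝓝 0))
    (hSx : Tendsto (cesaroMean fun t => S t * x t) atTop (𝓝 0)) :
    limsup (cesaroMean W) atTop ∈ Icc (σ2 / (2 * (M + K))) (σ2 / (2 * M)) ∧
      limsup (cesaroMean V) atTop ∈ Icc (σ2 / (2 * (M + K))) (σ2 / (2 * M)) := by
  have hSmem := mem_Icc_of_clamp hM.le hS0 hS
  -- By the two telescoped identities, `d n = (∑ W - ∑ V) / n` and, for `n > 0`,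
  -- `e n = (2M ∑ W + ∑ (W² + V²)) / n`.
  refine limsup_mem_Icc_of_energy_balance (q := cesaroMean fun t => W t ^ 2 + V t ^ 2)
    (d := fun n => cesaroMean x n - (S n - S 0) / n)
    (e := fun n => 2 * cesaroMean (fun t => S t * x t) n
      + cesaroMean (fun t => x t ^ 2 - σ2) n + (S 0 ^ 2 - S n ^ 2) / n + σ2)
    hM ((abs_nonneg _).trans (hx 0)) ?_ ?_ (fun n => ?_) (fun n => ?_) (fun n => ?_) ?_
  · have hbdd := tendsto_bdd_div_atTop_nhds_zero (f := fun n => S n - S 0) (b := -M) (B := M)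
      (.of_forall fun n => by linarith [(hSmem n).1, (hSmem 0).2])
      (.of_forall fun n => by linarith [(hSmem n).2, (hSmem 0).1]) tendsto_natCast_atTop_atTop
    simpa using hx1.sub hbdd
  · have hbdd := tendsto_bdd_div_atTop_nhds_zero (f := fun n => S 0 ^ 2 - S n ^ 2)
      (b := -M ^ 2) (B := M ^ 2)
      (.of_forall fun n => by nlinarith [(hSmem n).1, (hSmem n).2, (hSmem 0).1, (hSmem 0).2])
      (.of_forall fun n => by nlinarith [(hSmem n).1, (hSmem n).2, (hSmem 0).1, (hSmem 0).2])
      tendsto_natCast_atTop_atTop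
    simpa using (((hSx.const_mul 2).add hx2).add hbdd).add_const σ2
  · have h := congrArg (· / (n : ℝ)) (sum_sub_sum_eq_of_clamp hM.le hS hW hV n)
    simp only [sub_div] at h
    simp only [cesaroMean, sub_div]
    linarith
  · exact div_nonneg (Finset.sum_nonneg fun t _ => by positivity) n.cast_nonneg
  · have h := div_le_div_of_nonneg_right (sum_sq_le_of_clamp hM.le hS0 hS hW hV hx n)
      n.cast_nonneg
    simpa only [cesaroMean, mul_div_assoc, add_div] using h
  · filter_upwards [eventually_gt_atTop 0] with n hn
    have h := congrArg (· / (n : ℝ)) (energy_eq_of_clamp hM.le hS hW hV n)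
    simp only [add_div, sub_div, mul_div_assoc] at h
    simp only [cesaroMean, Finset.sum_sub_distrib, Finset.sum_const, Finset.card_range,
      nsmul_eq_mul, sub_div, mul_div_cancel_left₀ σ2 (n.cast_ne_zero.2 hn.ne' : (n : ℝ) ≠ 0)]
    linarith

end ReflectedWalk

section OrthogonalLLN

variable {Ω : Type*} [MeasurableSpace Ω] {μ : Measure Ω} [IsProbabilityMeasure μ]
  {Y : ℕ → Ω → ℝ} {K : ℝ}

lemma integral_sq_sum_range_le_of_orthogonal (hY : ∀ t, Measurable (Y t))
    (hbd : ∀ t ω, |Y t ω| ≤ K) (horth : Pairwise fun s t => ∫ ω, Y s ω * Y t ω ∂μ = 0)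
    (n : ℕ) : ∫ ω, (∑ t ∈ Finset.range n, Y t ω) ^ 2 ∂μ ≤ n * K ^ 2 := by
  have hint (s t : ℕ) : Integrable (fun ω => Y s ω * Y t ω) μ :=
    .of_bound ((hY s).mul (hY t)).aestronglyMeasurable (K * K) (.of_forall fun ω => by
      rw [norm_mul]
      exact mul_le_mul (hbd s ω) (hbd t ω) (norm_nonneg _) ((abs_nonneg _).trans (hbd s ω)))
  calc ∫ ω, (∑ t ∈ Finset.range n, Y t ω) ^ 2 ∂μ
      = ∑ s ∈ Finset.range n, ∑ t ∈ Finset.range n, ∫ ω, Y s ω * Y t ω ∂μ := by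
        simp_rw [sq, Finset.sum_mul_sum]
        rw [integral_finsetSum _ fun s _ => integrable_finsetSum _ fun t _ => hint s t]
        exact Finset.sum_congr rfl fun s _ => integral_finsetSum _ fun t _ => hint s t
    _ = ∑ s ∈ Finset.range n, ∫ ω, Y s ω * Y s ω ∂μ :=
        Finset.sum_congr rfl fun s hs =>
          Finset.sum_eq_single s (fun t _ hts => horth hts.symm) (absurd hs)
    _ ≤ ∑ s ∈ Finset.range n, K ^ 2 := by
        refine Finset.sum_le_sum fun s _ => ?_
        calc ∫ ω, Y s ω * Y s ω ∂μ ≤ ∫ _, K ^ 2 ∂μ :=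
              integral_mono (hint s s) (integrable_const _) fun ω => by
                rw [← sq, ← sq_abs]
                exact pow_le_pow_left₀ (abs_nonneg _) (hbd s ω) 2
          _ = K ^ 2 := by simp
    _ = n * K ^ 2 := by simp

lemma ae_tendsto_cesaroMean_sq_of_orthogonal (hY : ∀ t, Measurable (Y t))
    (hbd : ∀ t ω, |Y t ω| ≤ K) (horth : Pairwise fun s t => ∫ ω, Y s ω * Y t ω ∂μ = 0) :
    ∀ᵐ ω ∂μ, Tendsto (fun n => cesaroMean (fun t => Y t ω) (n ^ 2)) atTop (𝓝 0) := by
  set f : ℕ → Ω → ℝ := fun n ω => cesaroMean (fun t => Y t ω) (n ^ 2) ^ 2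
  have hf_meas (n : ℕ) : Measurable (f n) :=
    ((Finset.measurable_sum _ fun t _ => hY t).div_const _).pow_const 2
  have hf_int (n : ℕ) : Integrable (f n) μ :=
    .of_bound (hf_meas n).aestronglyMeasurable (K ^ 2) (.of_forall fun ω => by
      rw [Real.norm_eq_abs, abs_pow]
      exact pow_le_pow_left₀ (abs_nonneg _) (abs_cesaroMean_le (fun t => hbd t ω) _) 2)
  have hf_le (n : ℕ) : ∫ ω, f n ω ∂μ ≤ K ^ 2 / (n : ℝ) ^ 2 := by
    obtain rfl | hn := eq_or_ne n 0
    · simp [f, cesaroMean]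
    simp only [f, cesaroMean, div_pow]
    rw [integral_div]
    calc (∫ ω, (∑ t ∈ Finset.range (n ^ 2), Y t ω) ^ 2 ∂μ) / ((n ^ 2 : ℕ) : ℝ) ^ 2
        ≤ ((n ^ 2 : ℕ) * K ^ 2) / ((n ^ 2 : ℕ) : ℝ) ^ 2 := by
          gcongr
          exact integral_sq_sum_range_le_of_orthogonal hY hbd horth _
      _ = K ^ 2 / (n : ℝ) ^ 2 := by
          push_cast
          field_simp
  have hsum : Summable fun n : ℕ => K ^ 2 / (n : ℝ) ^ 2 := by
    simpa [div_eq_mul_inv] using (Real.summable_one_div_nat_pow.2 one_lt_two).mul_left (K ^ 2)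
  -- `∑ₙ E[f n] ≤ ∑ₙ K²/n² < ∞`, so `∑ₙ f n` converges almost surely.
  have hLp : ∑' n, eLpNorm (f n) 1 μ ≠ ⊤ := by
    refine ne_top_of_le_ne_top ENNReal.ofReal_ne_top
      ((ENNReal.tsum_le_tsum fun n => ?_).trans (ENNReal.ofReal_tsum_of_nonneg
        (fun n => by positivity) hsum).ge)
    rw [eLpNorm_one_eq_lintegral_enorm, ← ofReal_integral_norm_eq_lintegral_enorm (hf_int n),
      integral_congr_ae (.of_forall fun ω => Real.norm_of_nonneg (sq_nonneg _))]
    exact ENNReal.ofReal_le_ofReal (hf_le n)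
  filter_upwards [summable_norm_of_tsum_eLpNorm_ne_top le_rfl
    (fun n => (hf_meas n).aestronglyMeasurable) hLp] with ω hω
  refine squeeze_zero_norm (a := fun n => √‖f n ω‖) (fun n => ?_) ?_
  · simp [f, Real.sqrt_sq_eq_abs]
  · simpa using hω.tendsto_atTop_zero.sqrt

theorem ae_tendsto_cesaroMean_of_orthogonal (hY : ∀ t, Measurable (Y t))
    (hbd : ∀ t ω, |Y t ω| ≤ K) (horth : Pairwise fun s t => ∫ ω, Y s ω * Y t ω ∂μ = 0) :
    ∀ᵐ ω ∂μ, Tendsto (cesaroMean fun t => Y t ω) atTop (𝓝 0) :=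
  (ae_tendsto_cesaroMean_sq_of_orthogonal hY hbd horth).mono fun ω hω =>
    tendsto_cesaroMean_of_tendsto_sq (fun t => hbd t ω) hω

end OrthogonalLLN

section StrictPast

variable {Ω β : Type*} [MeasurableSpace β] {P : ℕ → Ω → β}

abbrev strictPast (P : ℕ → Ω → β) (t : ℕ) : MeasurableSpace Ω :=
  ⨆ i ∈ {i | i < t}, MeasurableSpace.comap (P i) inferInstance

lemma comap_le_strictPast {s t : ℕ} (hst : s < t) :
    MeasurableSpace.comap (P s) inferInstance ≤ strictPast P t :=
  le_iSup₂ (f := fun i (_ : i ∈ {i | i < t}) => MeasurableSpace.comap (P i) inferInstance) s hst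

lemma strictPast_mono : Monotone (strictPast P) := fun _ _ hst =>
  biSup_mono fun _ hi => lt_of_lt_of_le hi hst

variable [MeasurableSpace Ω] {μ : Measure Ω}

lemma strictPast_le (hP : ∀ i, Measurable (P i)) (t : ℕ) : strictPast P t ≤ ‹MeasurableSpace Ω› :=
  iSup₂_le fun i _ => (hP i).comap_le

lemma indepFun_of_strictPast (hP : ∀ i, Measurable (P i)) (hind : iIndepFun P μ) {t : ℕ}
    {F D : Ω → ℝ} (hF : Measurable[strictPast P t] F)
    (hD : Measurable[MeasurableSpace.comap (P t) inferInstance] D) : IndepFun F D μ := by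
  have h := indep_iSup_of_disjoint (fun i => (hP i).comap_le) hind.iIndep
    (S := {i | i < t}) (T := {t}) (by simp)
  rw [iSup_singleton] at h
  rw [IndepFun_iff_Indep]
  exact indep_of_indep_of_le_left (indep_of_indep_of_le_right h hD.comap_le) hF.comap_le

lemma integral_mul_eq_zero_of_strictPast (hP : ∀ i, Measurable (P i)) (hind : iIndepFun P μ)
    {t : ℕ} {F D : Ω → ℝ} (hF : Measurable[strictPast P t] F)
    (hD : Measurable[MeasurableSpace.comap (P t) inferInstance] D) (hD0 : ∫ ω, D ω ∂μ = 0) :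
    ∫ ω, F ω * D ω ∂μ = 0 := by
  have h := (indepFun_of_strictPast hP hind hF hD).integral_mul_eq_mul_integral
    (hF.mono (strictPast_le hP t) le_rfl).aestronglyMeasurable
    (hD.mono (hP t).comap_le le_rfl).aestronglyMeasurable
  simpa [hD0] using h

theorem ae_tendsto_cesaroMean_mul_of_strictPast [IsProbabilityMeasure μ]
    (hP : ∀ i, Measurable (P i)) (hind : iIndepFun P μ) {G D : ℕ → Ω → ℝ} {K L : ℝ}
    (hG : ∀ t, Measurable[strictPast P t] (G t))
    (hD : ∀ t, Measurable[MeasurableSpace.comap (P t) inferInstance] (D t))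
    (hD0 : ∀ t, ∫ ω, D t ω ∂μ = 0) (hGbd : ∀ t ω, |G t ω| ≤ K) (hDbd : ∀ t ω, |D t ω| ≤ L) :
    ∀ᵐ ω ∂μ, Tendsto (cesaroMean fun t => G t ω * D t ω) atTop (𝓝 0) := by
  have hlt {s t : ℕ} (hst : s < t) :
      Measurable[strictPast P t] fun ω => G s ω * D s ω * G t ω :=
    (((hG s).mono (strictPast_mono hst.le) le_rfl).mul
      ((hD s).mono (comap_le_strictPast hst) le_rfl)).mul (hG t)
  refine ae_tendsto_cesaroMean_of_orthogonal (K := K * L)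
    (fun t => ((hG t).mono (strictPast_le hP t) le_rfl).mul ((hD t).mono (hP t).comap_le le_rfl))
    (fun t ω => by
      rw [abs_mul]
      exact mul_le_mul (hGbd t ω) (hDbd t ω) (abs_nonneg _) ((abs_nonneg _).trans (hGbd t ω)))
    fun s t hst => ?_
  wlog h : s < t generalizing s t
  · exact (integral_congr_ae (.of_forall fun ω => mul_comm _ _)).trans
      (this t s hst.symm ((not_lt.1 h).lt_of_ne hst.symm))
  exact (integral_congr_ae (.of_forall fun ω => (mul_assoc _ _ _).symm)).trans
    (integral_mul_eq_zero_of_strictPast hP hind (hlt h) (hD t) (hD0 t))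

end StrictPast

lemma abs_sub_mul_le {b n Bmax Nmax α : ℝ} (hb : b ∈ Icc 0 Bmax) (hn : n ∈ Icc 0 Nmax)
    (hα : 0 ≤ α) : |b - n * α| ≤ Bmax + Nmax * α := by
  obtain ⟨hb0, hb1⟩ := hb
  obtain ⟨hn0, hn1⟩ := hn
  rw [abs_le]
  constructor <;> nlinarith [mul_le_mul_of_nonneg_right hn1 hα, mul_nonneg hn0 hα]

lemma variance_sub_mul_pos {Ω : Type*} [MeasurableSpace Ω] {μ : Measure Ω} {X Y : Ω → ℝ}
    (hX : MemLp X 2 μ) (hY : MemLp Y 2 μ) (hXY : IndepFun X Y μ) (hVar : 0 < variance X μ)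
    (α : ℝ) : 0 < variance (fun ω => X ω - Y ω * α) μ := by
  have h : (fun ω => X ω - Y ω * α) = X + (-α) • Y := by
    ext ω
    simp only [Pi.add_apply, Pi.smul_apply, smul_eq_mul]
    ring
  have hind : IndepFun X ((-α) • Y) μ := hXY.comp measurable_id (measurable_const_smul (-α))
  rw [h, hind.variance_add hX (hY.const_smul _), variance_smul]
  exact add_pos_of_pos_of_nonneg hVar (mul_nonneg (sq_nonneg _) (variance_nonneg _ _))

section StaticPolicy

variable {Ω : Type*} {B N : ℕ → Ω → ℝ} {M S0 α : ℝ}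

lemma inv_mem_Icc {A : ℕ → Ω → ℝ} (hM : 0 ≤ M) (hS0 : S0 ∈ Icc 0 M) :
    ∀ t ω, inv M S0 B N A t ω ∈ Icc 0 M
  | 0, _ => hS0
  | _ + 1, _ => clamp_mem_Icc hM _

lemma inv_succ_const (t : ℕ) (ω : Ω) :
    inv M S0 B N (fun _ _ => α) (t + 1) ω
      = clamp M (inv M S0 B N (fun _ _ => α) t ω + (B t ω - N t ω * α)) := by
  simp only [inv, add_sub_assoc]

lemma measurable_inv_strictPast (t : ℕ) :
    Measurable[strictPast (fun t ω => (B t ω, N t ω)) t] (inv M S0 B N (fun _ _ => α) t) := by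
  induction t with
  | zero => exact measurable_const
  | succ t ih =>
    have hP : Measurable[strictPast (fun t ω => (B t ω, N t ω)) (t + 1)]
        fun ω => (B t ω, N t ω) :=
      (comap_measurable _).mono
        (comap_le_strictPast (P := fun t ω => (B t ω, N t ω)) t.lt_succ_self) le_rfl
    exact (continuous_clamp M).measurable.comp
      (((ih.mono (strictPast_mono t.le_succ) le_rfl).add (measurable_fst.comp hP)).sub
        ((measurable_snd.comp hP).mul_const α))

variable [MeasurableSpace Ω] {μ : Measure Ω} [IsProbabilityMeasure μ]

lemma IsIIDPair.ae_tendsto_cesaroMean_mul (hBN : IsIIDPair μ B N) {G : ℕ → Ω → ℝ}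
    {φ : ℝ × ℝ → ℝ} {K L : ℝ} (hφ : Measurable φ) (hφ0 : ∫ ω, φ (B 0 ω, N 0 ω) ∂μ = 0)
    (hG : ∀ t, Measurable[strictPast (fun t ω => (B t ω, N t ω)) t] (G t))
    (hGbd : ∀ t ω, |G t ω| ≤ K) (hφbd : ∀ t ω, |φ (B t ω, N t ω)| ≤ L) :
    ∀ᵐ ω ∂μ, Tendsto (cesaroMean fun t => G t ω * φ (B t ω, N t ω)) atTop (𝓝 0) := by
  obtain ⟨hBm, hNm, hind, hident, -⟩ := hBN
  exact ae_tendsto_cesaroMean_mul_of_strictPast (fun t => (hBm t).prodMk (hNm t)) hind hG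
    (fun t => hφ.comp (comap_measurable _)) (fun t => ((hident t).comp hφ).integral_eq.trans hφ0)
    hGbd hφbd

theorem ae_Wbar_Vbar_mem_Icc {K σ2 : ℝ} (hBN : IsIIDPair μ B N)
    (hX : ∀ t ω, |B t ω - N t ω * α| ≤ K) (hmean : ∫ ω, (B 0 ω - N 0 ω * α) ∂μ = 0)
    (hσ2 : ∫ ω, (B 0 ω - N 0 ω * α) ^ 2 ∂μ = σ2) (hM : 0 < M) (hS0 : S0 ∈ Icc 0 M) :
    ∀ᵐ ω ∂μ, Wbar M S0 B N (fun _ _ => α) ω ∈ Icc (σ2 / (2 * (M + K))) (σ2 / (2 * M)) ∧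
      Vbar M S0 B N (fun _ _ => α) ω ∈ Icc (σ2 / (2 * (M + K))) (σ2 / (2 * M)) := by
  have hφ : Measurable fun p : ℝ × ℝ => p.1 - p.2 * α :=
    measurable_fst.sub (measurable_snd.mul_const α)
  have hXsq (t : ℕ) (ω : Ω) : |(B t ω - N t ω * α) ^ 2| ≤ K ^ 2 := by
    simpa [abs_pow] using pow_le_pow_left₀ (abs_nonneg _) (hX t ω) 2
  have hZ0 : ∫ ω, ((B 0 ω - N 0 ω * α) ^ 2 - σ2) ∂μ = 0 := by
    have hint : Integrable (fun ω => (B 0 ω - N 0 ω * α) ^ 2) μ :=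
      .of_bound ((hφ.comp ((hBN.1 0).prodMk (hBN.2.1 0))).pow_const 2).aestronglyMeasurable
        (K ^ 2) (.of_forall (hXsq 0))
    rw [integral_sub hint (integrable_const σ2), hσ2]
    simp
  have hX1 := hBN.ae_tendsto_cesaroMean_mul hφ hmean (fun _ => measurable_const)
    (fun _ _ => le_of_eq abs_one) hX
  have hX2 := hBN.ae_tendsto_cesaroMean_mul ((hφ.pow_const 2).sub_const σ2) hZ0
    (fun _ => measurable_const) (fun _ _ => le_of_eq abs_one)
    (fun t ω => (abs_sub _ _).trans (add_le_add_left (hXsq t ω) _))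
  have hSX := hBN.ae_tendsto_cesaroMean_mul (G := inv M S0 B N fun _ _ => α) hφ hmean
    measurable_inv_strictPast
    (fun t ω => (abs_of_nonneg (inv_mem_Icc hM.le hS0 t ω).1).trans_le
      (inv_mem_Icc hM.le hS0 t ω).2) hX
  filter_upwards [hX1, hX2, hSX] with ω hX1 hX2 hSX
  simp only [one_mul] at hX1 hX2
  exact limsup_cesaroMean_mem_Icc_of_clamp hM hS0 (fun t => inv_succ_const t ω)
    (fun t => by rw [ovf, add_sub_assoc]) (fun t => by rw [sko, add_sub_assoc]) (fun t => hX t ω)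
    hX1 hX2 hSX

end StaticPolicy

lemma NatValued.mem_Icc {Ω : Type*} {N : ℕ → Ω → ℝ} {Nmax : ℕ} (hN : NatValued N Nmax)
    (t : ℕ) (ω : Ω) : N t ω ∈ Icc 0 (Nmax : ℝ) := by
  obtain ⟨k, hk, he⟩ := hN t ω
  exact he ▸ ⟨k.cast_nonneg, by exact_mod_cast hk⟩

lemma weighted_add_mem_Icc {w v lo hi h b : ℝ} (hw : w ∈ Icc lo hi) (hv : v ∈ Icc lo hi)
    (hh : 0 ≤ h) (hb : 0 ≤ b) : h * w + b * v ∈ Icc ((h + b) * lo) ((h + b) * hi) := by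
  obtain ⟨hw1, hw2⟩ := hw
  obtain ⟨hv1, hv2⟩ := hv
  constructor <;> nlinarith

lemma integral_sub_mul_div_eq_zero {Ω : Type*} [MeasurableSpace Ω] {μ : Measure Ω}
    {X Y : Ω → ℝ} (hX : Integrable X μ) (hY : Integrable Y μ) (hY0 : ∫ ω, Y ω ∂μ ≠ 0) :
    ∫ ω, (X ω - Y ω * ((∫ ω, X ω ∂μ) / ∫ ω, Y ω ∂μ)) ∂μ = 0 := by
  rw [integral_sub hX (hY.mul_const _), integral_mul_const, mul_div_cancel₀ _ hY0, sub_self]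

lemma integral_sq_sub_mul_pos {Ω : Type*} [MeasurableSpace Ω] {μ : Measure Ω}
    [IsProbabilityMeasure μ] {X Y : Ω → ℝ} (hX : MemLp X 2 μ) (hY : MemLp Y 2 μ)
    (hXY : IndepFun X Y μ) (hVar : 0 < variance X μ) {α : ℝ}
    (hmean : ∫ ω, (X ω - Y ω * α) ∂μ = 0) : 0 < ∫ ω, (X ω - Y ω * α) ^ 2 ∂μ := by
  have h := variance_sub_mul_pos hX hY hXY hVar α
  rw [variance_eq_sub (X := fun ω => X ω - Y ω * α) (hX.sub (hY.mul_const _))] at h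
  simpa [hmean] using h

lemma Icc_div_subset {σ2 M K : ℝ} (hσ2 : 0 ≤ σ2) (hM : 0 < M) (hK : 0 ≤ K) (hKM : K ≤ M) :
    Icc (σ2 / (2 * (M + K))) (σ2 / (2 * M)) ⊆ Icc (σ2 / 4 / M) (σ2 / 2 / M) := by
  refine Icc_subset_Icc ?_ (div_div σ2 2 M).ge
  rw [div_div]
  exact div_le_div_of_nonneg_left hσ2 (by linarith) (by linarith)

theorem stmt_2_general
    {Ω : Type*} [MeasurableSpace Ω] (μ : Measure Ω) [IsProbabilityMeasure μ]
    (Bmax : ℝ) (Nmax : ℕ) (B N : ℕ → Ω → ℝ)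
    (hBN : IsIIDPair μ B N)
    (hBrange : ∀ t ω, B t ω ∈ Set.Icc 0 Bmax)
    (hNrange : NatValued N Nmax)
    (hVarB : 0 < variance (B 0) μ)
    (hμN : 0 < ∫ ω, N 0 ω ∂μ)
    (αstar : ℝ) (hαdef : αstar = (∫ ω, B 0 ω ∂μ) / ∫ ω, N 0 ω ∂μ) :
    ∃ c C M₀ : ℝ, 0 < c ∧ c ≤ C ∧ 0 < M₀ ∧
      ∀ M, M₀ ≤ M → ∀ S0 ∈ Set.Icc (0 : ℝ) M,
        ∀ᵐ ω ∂μ,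
          (c / M ≤ Wbar M S0 B N (fun _ _ => αstar) ω ∧
            Wbar M S0 B N (fun _ _ => αstar) ω ≤ C / M) ∧
          (c / M ≤ Vbar M S0 B N (fun _ _ => αstar) ω ∧
            Vbar M S0 B N (fun _ _ => αstar) ω ≤ C / M) ∧
          ∀ h b : ℝ, 0 < h → 0 < b →
            (h + b) * c / M ≤
                h * Wbar M S0 B N (fun _ _ => αstar) ω +
                  b * Vbar M S0 B N (fun _ _ => αstar) ω ∧
              h * Wbar M S0 B N (fun _ _ => αstar) ω +
                  b * Vbar M S0 B N (fun _ _ => αstar) ω ≤ (h + b) * C / M := by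
  have ⟨hBm, hNm, _, _, hBNind⟩ := hBN
  have hBL2 : MemLp (B 0) 2 μ :=
    memLp_of_bounded (.of_forall (hBrange 0)) (hBm 0).aestronglyMeasurable 2
  have hNL2 : MemLp (N 0) 2 μ :=
    memLp_of_bounded (.of_forall (hNrange.mem_Icc 0)) (hNm 0).aestronglyMeasurable 2
  have hα : 0 ≤ αstar := hαdef ▸ div_nonneg (integral_nonneg fun ω => (hBrange 0 ω).1) hμN.le
  have hX (t : ℕ) (ω : Ω) : |B t ω - N t ω * αstar| ≤ Bmax + Nmax * αstar :=
    abs_sub_mul_le (hBrange t ω) (hNrange.mem_Icc t ω) hα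
  have hmean : ∫ ω, (B 0 ω - N 0 ω * αstar) ∂μ = 0 := hαdef ▸
    integral_sub_mul_div_eq_zero (hBL2.integrable one_le_two) (hNL2.integrable one_le_two) hμN.ne'
  have hσ2 := integral_sq_sub_mul_pos hBL2 hNL2 (hBNind 0) hVarB hmean
  have hK : 0 ≤ Bmax + Nmax * αstar :=
    (abs_nonneg _).trans (hX 0 (nonempty_of_isProbabilityMeasure μ).some)
  refine ⟨_, _, Bmax + Nmax * αstar + 1, div_pos hσ2 four_pos,
    div_le_div_of_nonneg_left hσ2.le two_pos (by norm_num), by linarith, fun M hM S0 hS0 => ?_⟩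
  have hM0 : 0 < M := by linarith
  filter_upwards [ae_Wbar_Vbar_mem_Icc hBN hX hmean rfl hM0 hS0] with ω ⟨hW, hV⟩
  have hW' := Icc_div_subset hσ2.le hM0 hK (by linarith) hW
  have hV' := Icc_div_subset hσ2.le hM0 hK (by linarith) hV
  refine ⟨hW', hV', fun h b hh hb => ?_⟩
  simpa only [mul_div_assoc, mem_Icc] using weighted_add_mem_Icc hW' hV' hh.le hb.le

/-- Theorem 2 of the paper. The static (proportional) policy that allocates
`α* = μ_B/μ_N` in every round satisfies, for all large enough capacities `M`, almost surely
`c/M ≤ W̄ ≤ C/M` and `c/M ≤ V̄ ≤ C/M`, where the constants `0 < c ≤ C < ∞` and `M₀` depend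
only on the distributions of `B₁, N₁` and not on `M`.  In particular, for any per-unit costs
`h, b > 0`, the inefficiency `h·W̄ + b·V̄` is `Θ(1/M)` as `M → ∞`. -/
theorem stmt_2
    {Ω : Type*} [MeasurableSpace Ω] (μ : Measure Ω) [IsProbabilityMeasure μ]
    (Bmax Amax : ℝ) (Nmax : ℕ) (B N : ℕ → Ω → ℝ)
    (hBN : IsIIDPair μ B N)
    (hBrange : ∀ t ω, B t ω ∈ Set.Icc 0 Bmax)
    (hNrange : NatValued N Nmax)
    (hμB : 0 < ∫ ω, B 0 ω ∂μ) (hVarB : 0 < variance (B 0) μ)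
    (hμN : 0 < ∫ ω, N 0 ω ∂μ)
    (αstar : ℝ) (hαdef : αstar = (∫ ω, B 0 ω ∂μ) / ∫ ω, N 0 ω ∂μ)
    (hαA : αstar ≤ Amax) :
    ∃ c C M₀ : ℝ, 0 < c ∧ c ≤ C ∧ 0 < M₀ ∧
      ∀ M, M₀ ≤ M → ∀ S0 ∈ Set.Icc (0 : ℝ) M,
        ∀ᵐ ω ∂μ,
          (c / M ≤ Wbar M S0 B N (fun _ _ => αstar) ω ∧
            Wbar M S0 B N (fun _ _ => αstar) ω ≤ C / M) ∧
          (c / M ≤ Vbar M S0 B N (fun _ _ => αstar) ω ∧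
            Vbar M S0 B N (fun _ _ => αstar) ω ≤ C / M) ∧
          ∀ h b : ℝ, 0 < h → 0 < b →
            (h + b) * c / M ≤
                h * Wbar M S0 B N (fun _ _ => αstar) ω +
                  b * Vbar M S0 B N (fun _ _ => αstar) ω ∧
              h * Wbar M S0 B N (fun _ _ => αstar) ω +
                  b * Vbar M S0 B N (fun _ _ => αstar) ω ≤ (h + b) * C / M :=
  stmt_2_general μ Bmax Nmax B N hBN hBrange hNrange hVarB hμN αstar hαdef
end
end

section
/- Let (Z_t)_{t≥1} be i.i.d. with μ = E[Z_1] > 0 and Z_1 ∈ [−Z_min, Z_max] almost surely, with P(Z_1 < 0) > 0, and suppose there exist ε, δ > 0 with P(Z_1 ≥ ε) ≥ δ and P(Z_1 ≤ −ε) ≥ δ. Let Q_t = M + Σ_{s=1}^t Z_s and τ = inf{t > 0 : Q_t ∉ (0, M)}. Then P(Q_τ ≥ M | Z_1 < 0) ≥ ( M + E[Z_1 | Z_1 < 0] ) / ( M + Z_max ). -/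
open MeasureTheory ProbabilityTheory Filter Set Real
open scoped ENNReal NNReal

noncomputable section

/-- The random walk `Q_t = S0 + Σ_{s=1}^t Z_s` started at `S0` with increments `Z`.
(Indexing: the paper's `Z_t` for `t ≥ 1` corresponds to `Z (t-1)` here.) -/
def walkZ {Ω : Type*} (S0 : ℝ) (Z : ℕ → Ω → ℝ) (t : ℕ) (ω : Ω) : ℝ :=
  S0 + ∑ s ∈ Finset.range t, Z s ω

/-- First exit time (at a positive time) of the walk from the open interval `(0, M)`;
by convention `sInf ∅ = 0`. -/
def exitZ {Ω : Type*} (M S0 : ℝ) (Z : ℕ → Ω → ℝ) (ω : Ω) : ℕ :=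
  sInf {t | 0 < t ∧ walkZ S0 Z t ω ∉ Set.Ioo 0 M}

/-- The value of the walk at its exit time. -/
def stopVal {Ω : Type*} (M S0 : ℝ) (Z : ℕ → Ω → ℝ) (ω : Ω) : ℝ :=
  walkZ S0 Z (exitZ M S0 Z ω) ω

/-- `Z` is an i.i.d. sequence of (measurable) real random variables. -/
def IsIID {Ω : Type*} [MeasurableSpace Ω] (μ : Measure Ω) (Z : ℕ → Ω → ℝ) : Prop :=
  (∀ t, Measurable (Z t)) ∧ iIndepFun Z μ ∧
  ∀ t, IdentDistrib (Z t) (Z 0) μ μ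

/-- Elementary conditional expectation of `f` given the event `E`. -/
def cexp {Ω : Type*} [MeasurableSpace Ω] (μ : Measure Ω) (f : Ω → ℝ) (E : Set Ω) : ℝ :=
  (∫ ω in E, f ω ∂μ) / (μ E).toReal

/-- Elementary conditional probability of `A` given the event `E`. -/
def cprob {Ω : Type*} [MeasurableSpace Ω] (μ : Measure Ω) (A E : Set Ω) : ℝ :=
  (μ (A ∩ E)).toReal / (μ E).toReal

/-! The stopped walk `Y_n = Q_{min(n, τ)}` has increments `Y_{n+1} - Y_n = 1{τ > n} Z_{n+1}`,
and `{τ > n}` is determined by `Z_1, …, Z_n`. By independence the increment has mean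
`P(A, τ > n) E[Z_1] ≥ 0` on every event `A ∈ σ(Z_1, …, Z_n)`; with `A = {Z_1 < 0}` this gives
`E[Y_n ; Z_1 < 0] ≥ E[Y_1 ; Z_1 < 0] = E[M + Z_1 ; Z_1 < 0]` for `n ≥ 1`. On the other hand
`Y_n ≤ M` before `τ`, `Q_τ ≤ M + Z_max`, and `Q_τ ≤ 0` when the walk leaves through the bottom, so
`E[Y_n ; Z_1 < 0] ≤ (M + Z_max) P({Q_τ ≥ M} ∪ {τ > n}, Z_1 < 0)`. Letting `n → ∞` removes
`{τ > n}`, because paths that never leave `(0, M)` have `τ = 0` by the `sInf ∅ = 0` convention,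
hence `Q_τ = M`. -/

open scoped Topology

lemma measurable_sInf_setOf_nat {Ω : Type*} [MeasurableSpace Ω] {p : ℕ → Ω → Prop}
    (hp : ∀ k, MeasurableSet {ω | p k ω}) : Measurable fun ω => sInf {k | p k ω} := by
  refine measurable_to_countable' fun k => ?_
  have : (fun ω => sInf {k | p k ω}) ⁻¹' {k} =
      ({ω | p k ω} ∩ ⋂ j < k, {ω | p j ω}ᶜ) ∪ ({ω | k = 0} ∩ ⋂ j, {ω | p j ω}ᶜ) := by
    ext ω
    simp only [mem_preimage, mem_singleton_iff, mem_union, mem_inter_iff, mem_iInter,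
      mem_compl_iff, mem_ofPred_eq]
    refine ⟨fun hk => ?_, ?_⟩
    · rcases eq_empty_or_nonempty {k | p k ω} with hS | hS
      · rw [hS, Nat.sInf_empty] at hk
        exact Or.inr ⟨hk.symm, fun j hj => (hS ▸ hj : j ∈ (∅ : Set ℕ))⟩
      · exact Or.inl ⟨hk ▸ Nat.sInf_mem hS, fun j hj => Nat.notMem_of_lt_sInf (hk ▸ hj)⟩
    · rintro (⟨hk, hlt⟩ | ⟨rfl, hnone⟩)
      · exact le_antisymm (Nat.sInf_le hk)
          (not_lt.1 fun h => hlt _ h (Nat.sInf_mem (⟨k, hk⟩ : {k | p k ω}.Nonempty)))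
      · rw [show {j | p j ω} = ∅ from eq_empty_of_forall_notMem hnone, Nat.sInf_empty]
  rw [this]
  exact ((hp k).inter (.biInter (to_countable _) fun j _ => (hp j).compl)).union
    ((MeasurableSet.const _).inter (.iInter fun j => (hp j).compl))

theorem ProbabilityTheory.iIndepFun.setIntegral_eq_measureReal_mul_integral
    {Ω ι : Type*} [MeasurableSpace Ω] {μ : Measure Ω} [LinearOrder ι] {X : ι → Ω → ℝ}
    (hX : ∀ i, StronglyMeasurable (X i)) (hindep : iIndepFun X μ) {i j : ι} (hij : i < j)
    (hint : Integrable (X j) μ) {s : Set Ω}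
    (hs : MeasurableSet[Filtration.natural X hX i] s) :
    ∫ ω in s, X j ω ∂μ = μ.real s * ∫ ω, X j ω ∂μ := by
  have := hindep.isProbabilityMeasure
  rw [← setIntegral_condExp ((Filtration.natural X hX).le i) hint hs,
    setIntegral_congr_ae (hs := (Filtration.natural X hX).le i s hs)
      (ae_imp_of_ae_restrict (ae_restrict_of_ae (hindep.condExp_natural_ae_eq_of_lt hX hij))),
    setIntegral_const, smul_eq_mul]

section

variable {Ω : Type*} {M S0 : ℝ} {Z : ℕ → Ω → ℝ} {ω : Ω} {n : ℕ}

@[simp]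
lemma walkZ_zero : walkZ S0 Z 0 ω = S0 := by simp [walkZ]

lemma walkZ_succ : walkZ S0 Z (n + 1) ω = walkZ S0 Z n ω + Z n ω := by
  simp [walkZ, Finset.sum_range_succ, add_assoc]

/-- `{n < τ}`, where `τ = ∞` on paths that never leave `(0, M)` (while `exitZ` is `0` there). -/
def notExitedBy (M S0 : ℝ) (Z : ℕ → Ω → ℝ) (n : ℕ) : Set Ω :=
  {ω | ∀ t, 0 < t → t ≤ n → walkZ S0 Z t ω ∈ Ioo 0 M}

/-- `Q_{min(n, τ)}`, written as the martingale transform `S0 + ∑_{s < n} 1{s < τ} Z_s`. -/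
def stoppedWalk (M S0 : ℝ) (Z : ℕ → Ω → ℝ) (n : ℕ) (ω : Ω) : ℝ :=
  S0 + ∑ s ∈ Finset.range n, (notExitedBy M S0 Z s).indicator (Z s) ω

lemma mem_notExitedBy_zero : ω ∈ notExitedBy M S0 Z 0 :=
  fun _ ht ht0 => absurd ht (by omega)

lemma mem_notExitedBy_succ :
    ω ∈ notExitedBy M S0 Z (n + 1) ↔
      ω ∈ notExitedBy M S0 Z n ∧ walkZ S0 Z (n + 1) ω ∈ Ioo 0 M := by
  refine ⟨fun h => ⟨fun t ht htn => h t ht (by omega), h _ n.succ_pos le_rfl⟩, ?_⟩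
  rintro ⟨h, hn⟩ t ht htn
  rcases Nat.lt_or_ge t (n + 1) with hlt | hge
  · exact h t ht (by omega)
  · rwa [le_antisymm htn hge]

lemma notExitedBy_antitone : Antitone (notExitedBy M S0 Z) :=
  fun _ _ hmn _ h t ht htm => h t ht (htm.trans hmn)

lemma exitZ_eq_succ (h : ω ∈ notExitedBy M S0 Z n) (hout : walkZ S0 Z (n + 1) ω ∉ Ioo 0 M) :
    exitZ M S0 Z ω = n + 1 := by
  have hmem : n + 1 ∈ {t | 0 < t ∧ walkZ S0 Z t ω ∉ Ioo 0 M} := ⟨n.succ_pos, hout⟩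
  refine le_antisymm (Nat.sInf_le hmem) (not_lt.1 fun hlt => ?_)
  obtain ⟨hpos, hnot⟩ := Nat.sInf_mem ⟨_, hmem⟩
  exact hnot (h _ hpos (Nat.lt_succ_iff.1 hlt))

lemma exists_exitZ_eq_succ (h : ω ∉ notExitedBy M S0 Z n) :
    ∃ k, ω ∈ notExitedBy M S0 Z k ∧ walkZ S0 Z (k + 1) ω ∉ Ioo 0 M ∧
      exitZ M S0 Z ω = k + 1 := by
  induction n with
  | zero => exact absurd mem_notExitedBy_zero h
  | succ k ih =>
    by_cases hk : ω ∈ notExitedBy M S0 Z k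
    · have hout : walkZ S0 Z (k + 1) ω ∉ Ioo 0 M := fun hin => h (mem_notExitedBy_succ.2 ⟨hk, hin⟩)
      exact ⟨k, hk, hout, exitZ_eq_succ hk hout⟩
    · exact ih hk

lemma stopVal_eq_of_forall_mem (h : ∀ n, ω ∈ notExitedBy M S0 Z n) : stopVal M S0 Z ω = S0 := by
  have hempty : {t | 0 < t ∧ walkZ S0 Z t ω ∉ Ioo 0 M} = ∅ :=
    eq_empty_of_forall_notMem fun t ht => ht.2 (h t t ht.1 le_rfl)
  rw [stopVal, exitZ, hempty, Nat.sInf_empty, walkZ_zero]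

lemma stoppedWalk_succ :
    stoppedWalk M S0 Z (n + 1) ω =
      stoppedWalk M S0 Z n ω + (notExitedBy M S0 Z n).indicator (Z n) ω := by
  simp only [stoppedWalk, Finset.sum_range_succ, add_assoc]

lemma stoppedWalk_one : stoppedWalk M S0 Z 1 ω = S0 + Z 0 ω := by
  simp [stoppedWalk, mem_notExitedBy_zero]

open scoped Classical in
lemma stoppedWalk_eq_ite :
    stoppedWalk M S0 Z n ω =
      if ω ∈ notExitedBy M S0 Z n then walkZ S0 Z n ω else stopVal M S0 Z ω := by
  induction n with
  | zero => simp [stoppedWalk, mem_notExitedBy_zero]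
  | succ n ih =>
    rw [stoppedWalk_succ, ih]
    by_cases hn : ω ∈ notExitedBy M S0 Z n
    · rw [if_pos hn, indicator_of_mem hn, ← walkZ_succ]
      by_cases hin : walkZ S0 Z (n + 1) ω ∈ Ioo 0 M
      · rw [if_pos (mem_notExitedBy_succ.2 ⟨hn, hin⟩)]
      · rw [if_neg fun h => hin (mem_notExitedBy_succ.1 h).2, stopVal, exitZ_eq_succ hn hin]
    · rw [if_neg hn, if_neg fun h => hn (mem_notExitedBy_succ.1 h).1, indicator_of_notMem hn,
        add_zero]

lemma walkZ_le_of_mem_notExitedBy (hS0 : S0 ≤ M) (h : ω ∈ notExitedBy M S0 Z n) :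
    walkZ S0 Z n ω ≤ M := by
  rcases Nat.eq_zero_or_pos n with rfl | hn
  · simpa using hS0
  · exact (h n hn le_rfl).2.le

lemma stopVal_le (hS0 : S0 ≤ M) {b : ℝ} (hZ : ∀ t, Z t ω ≤ b) (h : ω ∉ notExitedBy M S0 Z n) :
    stopVal M S0 Z ω ≤ M + b := by
  obtain ⟨k, hk, -, hexit⟩ := exists_exitZ_eq_succ h
  rw [stopVal, hexit, walkZ_succ]
  exact add_le_add (walkZ_le_of_mem_notExitedBy hS0 hk) (hZ k)

lemma stopVal_nonpos_of_lt (h : ω ∉ notExitedBy M S0 Z n) (hlt : stopVal M S0 Z ω < M) :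
    stopVal M S0 Z ω ≤ 0 := by
  obtain ⟨k, -, hout, hexit⟩ := exists_exitZ_eq_succ h
  rw [stopVal, hexit] at hlt ⊢
  by_contra hpos
  exact hout ⟨not_le.1 hpos, hlt⟩

lemma stoppedWalk_le_indicator (hS0 : S0 ≤ M) {b : ℝ} (hb : 0 ≤ b) (hZ : ∀ t, Z t ω ≤ b) :
    stoppedWalk M S0 Z n ω ≤
      ({ω | M ≤ stopVal M S0 Z ω} ∪ notExitedBy M S0 Z n).indicator (fun _ => M + b) ω := by
  rw [stoppedWalk_eq_ite]
  by_cases hn : ω ∈ notExitedBy M S0 Z n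
  · rw [if_pos hn, indicator_of_mem (mem_union_right _ hn)]
    linarith [walkZ_le_of_mem_notExitedBy hS0 hn]
  · rw [if_neg hn]
    by_cases hG : M ≤ stopVal M S0 Z ω
    · rw [indicator_of_mem (mem_union_left _ (show ω ∈ {ω | M ≤ stopVal M S0 Z ω} from hG))]
      exact stopVal_le hS0 hZ hn
    · rw [indicator_of_notMem (by simp [hG, hn])]
      exact stopVal_nonpos_of_lt hn (not_le.1 hG)

end


section

variable {Ω : Type*} {M S0 : ℝ} {Z : ℕ → Ω → ℝ} {n : ℕ}

lemma measurable_walkZ {m : MeasurableSpace Ω} (hZ : ∀ t < n, Measurable[m] (Z t)) :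
    Measurable[m] (walkZ S0 Z n) :=
  measurable_const.add (Finset.measurable_sum _ fun t ht => hZ t (Finset.mem_range.1 ht))

lemma measurableSet_notExitedBy {m : MeasurableSpace Ω} (hZ : ∀ t < n, Measurable[m] (Z t)) :
    MeasurableSet[m] (notExitedBy M S0 Z n) := by
  have : notExitedBy M S0 Z n = ⋂ t ∈ Finset.Ioc 0 n, walkZ S0 Z t ⁻¹' Ioo 0 M := by
    ext ω
    simp [notExitedBy, and_imp]
  rw [this]
  exact Finset.measurableSet_biInter _ fun t ht =>
    measurable_walkZ (fun s hs => hZ s (hs.trans_le (Finset.mem_Ioc.1 ht).2)) measurableSet_Ioo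

variable [MeasurableSpace Ω]

lemma measurable_stopVal (hZ : ∀ t, Measurable (Z t)) : Measurable (stopVal M S0 Z) := by
  have hexit : Measurable (exitZ M S0 Z) := measurable_sInf_setOf_nat fun t =>
    (MeasurableSet.const _).inter ((measurable_walkZ fun s _ => hZ s) measurableSet_Ioo).compl
  have hwalk : Measurable fun p : Ω × ℕ => walkZ S0 Z p.2 p.1 :=
    measurable_from_prod_countable_left fun t => measurable_walkZ fun s _ => hZ s
  exact hwalk.comp (measurable_id.prodMk hexit)

lemma integrable_stoppedWalk {μ : Measure Ω} [IsFiniteMeasure μ] (hZ : ∀ t, Measurable (Z t))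
    (hint : ∀ t, Integrable (Z t) μ) : Integrable (stoppedWalk M S0 Z n) μ :=
  (integrable_const _).add (integrable_finsetSum _ fun t _ =>
    (hint t).indicator (measurableSet_notExitedBy fun s _ => hZ s))

end


section

variable {Ω : Type*} [MeasurableSpace Ω] {μ : Measure Ω} [IsFiniteMeasure μ]
  {M S0 : ℝ} {Z : ℕ → Ω → ℝ}

lemma setIntegral_stoppedWalk_le_succ (hZ : ∀ t, StronglyMeasurable (Z t))
    (hindep : iIndepFun Z μ) (hint : ∀ t, Integrable (Z t) μ) (hmean : ∀ t, 0 ≤ ∫ ω, Z t ω ∂μ)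
    {i : ℕ} {s : Set Ω} (hs : MeasurableSet[Filtration.natural Z hZ i] s) :
    ∫ ω in s, stoppedWalk M S0 Z (i + 1) ω ∂μ ≤ ∫ ω in s, stoppedWalk M S0 Z (i + 2) ω ∂μ := by
  set ℱ := Filtration.natural Z hZ
  have hN : MeasurableSet[ℱ i] (notExitedBy M S0 Z (i + 1)) :=
    measurableSet_notExitedBy fun t ht =>
      ((Filtration.stronglyAdapted_natural hZ t).mono (ℱ.mono (Nat.lt_succ_iff.1 ht))).measurable
  have hincr : ∫ ω in s, (notExitedBy M S0 Z (i + 1)).indicator (Z (i + 1)) ω ∂μ =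
      μ.real (s ∩ notExitedBy M S0 Z (i + 1)) * ∫ ω, Z (i + 1) ω ∂μ := by
    rw [setIntegral_indicator (ℱ.le i _ hN)]
    exact hindep.setIntegral_eq_measureReal_mul_integral hZ i.lt_succ_self (hint _) (hs.inter hN)
  simp_rw [stoppedWalk_succ (n := i + 1)]
  rw [integral_add (integrable_stoppedWalk (fun t => (hZ t).measurable) hint).integrableOn
    ((hint _).indicator (ℱ.le i _ hN)).integrableOn, hincr]
  exact le_add_of_nonneg_right (mul_nonneg measureReal_nonneg (hmean _))

lemma monotone_setIntegral_stoppedWalk (hZ : ∀ t, StronglyMeasurable (Z t))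
    (hindep : iIndepFun Z μ) (hint : ∀ t, Integrable (Z t) μ) (hmean : ∀ t, 0 ≤ ∫ ω, Z t ω ∂μ)
    {s : Set Ω} (hs : MeasurableSet[Filtration.natural Z hZ 0] s) :
    Monotone fun n => ∫ ω in s, stoppedWalk M S0 Z (n + 1) ω ∂μ :=
  monotone_nat_of_le_succ fun n => setIntegral_stoppedWalk_le_succ hZ hindep hint hmean
    (Filtration.natural Z hZ |>.mono n.zero_le s hs)

lemma setIntegral_stoppedWalk_le (hS0 : S0 ≤ M) {b : ℝ} (hb : 0 ≤ b)
    (hZ : ∀ t, Measurable (Z t)) (hint : ∀ t, Integrable (Z t) μ)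
    (hbound : ∀ᵐ ω ∂μ, ∀ t, Z t ω ≤ b) (s : Set Ω) (n : ℕ) :
    ∫ ω in s, stoppedWalk M S0 Z n ω ∂μ ≤
      (M + b) * μ.real (s ∩ ({ω | M ≤ stopVal M S0 Z ω} ∪ notExitedBy M S0 Z n)) := by
  have hmeas : MeasurableSet ({ω | M ≤ stopVal M S0 Z ω} ∪ notExitedBy M S0 Z n) :=
    (measurableSet_le measurable_const (measurable_stopVal hZ)).union
      (measurableSet_notExitedBy fun t _ => hZ t)
  calc ∫ ω in s, stoppedWalk M S0 Z n ω ∂μ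
      ≤ ∫ ω in s, ({ω | M ≤ stopVal M S0 Z ω} ∪ notExitedBy M S0 Z n).indicator
          (fun _ => M + b) ω ∂μ :=
        setIntegral_mono_ae (integrable_stoppedWalk hZ hint).integrableOn
          ((integrable_const _).indicator hmeas).integrableOn
          (hbound.mono fun _ hω => stoppedWalk_le_indicator hS0 hb hω)
    _ = (M + b) * μ.real (s ∩ ({ω | M ≤ stopVal M S0 Z ω} ∪ notExitedBy M S0 Z n)) := by
        rw [setIntegral_indicator hmeas, setIntegral_const, smul_eq_mul, mul_comm]

lemma tendsto_measureReal_inter_union_notExitedBy (hZ : ∀ t, Measurable (Z t)) {s : Set Ω}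
    (hs : MeasurableSet s) :
    Tendsto (fun n => μ.real (s ∩ ({ω | M ≤ stopVal M M Z ω} ∪ notExitedBy M M Z n))) atTop
      (𝓝 (μ.real (s ∩ {ω | M ≤ stopVal M M Z ω}))) := by
  set G := {ω | M ≤ stopVal M M Z ω}
  have hmeas : ∀ n, MeasurableSet (s ∩ (G ∪ notExitedBy M M Z n)) := fun n =>
    hs.inter ((measurableSet_le measurable_const (measurable_stopVal hZ)).union
      (measurableSet_notExitedBy fun t _ => hZ t))
  have hanti : Antitone fun n => s ∩ (G ∪ notExitedBy M M Z n) := fun _ _ hmn =>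
    inter_subset_inter_right _ (union_subset_union_right _ (notExitedBy_antitone hmn))
  have hinter : ⋂ n, s ∩ (G ∪ notExitedBy M M Z n) = s ∩ G := by
    refine subset_antisymm (fun ω hω => ?_) fun ω hω => mem_iInter.2 fun _ => ⟨hω.1, Or.inl hω.2⟩
    rw [mem_iInter] at hω
    refine ⟨(hω 0).1, ?_⟩
    by_contra hG
    have hall : ∀ n, ω ∈ notExitedBy M M Z n := fun n => (hω n).2.resolve_left hG
    exact hG (stopVal_eq_of_forall_mem hall).ge
  have hlim := tendsto_measure_iInter_atTop (fun n => (hmeas n).nullMeasurableSet) hanti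
    ⟨0, measure_ne_top μ _⟩
  rw [hinter] at hlim
  exact (ENNReal.tendsto_toReal (measure_ne_top _ _)).comp hlim

end

theorem stmt_14_general
    {Ω : Type*} [MeasurableSpace Ω] (μ : Measure Ω) [IsProbabilityMeasure μ]
    (M Zmin Zmax : ℝ) (Z : ℕ → Ω → ℝ)
    (hM : 0 < M) (hZmax : 0 < Zmax)
    (hiid : IsIID μ Z)
    (hmean : 0 < ∫ ω, Z 0 ω ∂μ)
    (hrange : ∀ t, ∀ᵐ ω ∂μ, Z t ω ∈ Set.Icc (-Zmin) Zmax)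
    (hneg : 0 < μ {ω | Z 0 ω < 0}) :
    (M + cexp μ (Z 0) {ω | Z 0 ω < 0}) / (M + Zmax) ≤
      cprob μ {ω | M ≤ stopVal M M Z ω} {ω | Z 0 ω < 0} := by
  obtain ⟨hmeas, hindep, hident⟩ := hiid
  have hZ : ∀ t, StronglyMeasurable (Z t) := fun t => (hmeas t).stronglyMeasurable
  have hint : ∀ t, Integrable (Z t) μ := fun t =>
    Integrable.of_mem_Icc (-Zmin) Zmax (hmeas t).aemeasurable (hrange t)
  have hmean_nonneg : ∀ t, 0 ≤ ∫ ω, Z t ω ∂μ := fun t => (hident t).integral_eq ▸ hmean.le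
  set E := {ω | Z 0 ω < 0}
  set G := {ω | M ≤ stopVal M M Z ω}
  have hE : MeasurableSet[Filtration.natural Z hZ 0] E :=
    measurableSet_lt (Filtration.stronglyAdapted_natural hZ 0).measurable measurable_const
  have hlower : ∀ n, M * μ.real E + ∫ ω in E, Z 0 ω ∂μ ≤
      ∫ ω in E, stoppedWalk M M Z (n + 1) ω ∂μ := fun n => by
    refine le_of_eq_of_le ?_ (monotone_setIntegral_stoppedWalk hZ hindep hint hmean_nonneg hE
      n.zero_le)
    simp_rw [zero_add, stoppedWalk_one]
    rw [integral_add (integrable_const _).integrableOn (hint 0).integrableOn, setIntegral_const,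
      smul_eq_mul, mul_comm]
  have hupper := setIntegral_stoppedWalk_le (le_refl M) hZmax.le hmeas hint
    (ae_all_iff.2 fun t => (hrange t).mono fun _ hω => hω.2) E
  have hlim := tendsto_measureReal_inter_union_notExitedBy (μ := μ) (M := M) hmeas
    (Filtration.natural Z hZ |>.le 0 E hE)
  have key : M * μ.real E + ∫ ω in E, Z 0 ω ∂μ ≤ (M + Zmax) * μ.real (E ∩ G) :=
    ge_of_tendsto' ((hlim.comp (tendsto_add_atTop_nat 1)).const_mul _)
      fun n => (hlower n).trans (hupper _)
  have hEpos : 0 < μ.real E := ENNReal.toReal_pos hneg.ne' (measure_ne_top μ E)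
  rw [cexp, cprob, ← measureReal_def, ← measureReal_def, inter_comm,
    div_le_div_iff₀ (by positivity) hEpos]
  calc (M + (∫ ω in E, Z 0 ω ∂μ) / μ.real E) * μ.real E
      = M * μ.real E + ∫ ω in E, Z 0 ω ∂μ := by field_simp
    _ ≤ μ.real (E ∩ G) * (M + Zmax) := by linarith

/-- Lemma 8 of the paper. For a bounded i.i.d. walk with strictly positive
mean started at `M`, conditioning on a negative first step,
`P(Q_τ ≥ M | Z₁ < 0) ≥ (M + E[Z₁ | Z₁ < 0]) / (M + Z_max)`. -/
theorem stmt_14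
    {Ω : Type*} [MeasurableSpace Ω] (μ : Measure Ω) [IsProbabilityMeasure μ]
    (M Zmin Zmax : ℝ) (Z : ℕ → Ω → ℝ)
    (hM : 0 < M) (hZmin : 0 < Zmin) (hZmax : 0 < Zmax)
    (hiid : IsIID μ Z)
    (hmean : 0 < ∫ ω, Z 0 ω ∂μ)
    (hrange : ∀ t, ∀ᵐ ω ∂μ, Z t ω ∈ Set.Icc (-Zmin) Zmax)
    (hneg : 0 < μ {ω | Z 0 ω < 0})
    (ε δ : ℝ) (hε : 0 < ε) (hδ : 0 < δ)
    (hup : ENNReal.ofReal δ ≤ μ {ω | ε ≤ Z 0 ω})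
    (hdown : ENNReal.ofReal δ ≤ μ {ω | Z 0 ω ≤ -ε}) :
    (M + cexp μ (Z 0) {ω | Z 0 ω < 0}) / (M + Zmax) ≤
      cprob μ {ω | M ≤ stopVal M M Z ω} {ω | Z 0 ω < 0} :=
  stmt_14_general μ M Zmin Zmax Z hM hZmax hiid hmean hrange hneg
end
end

section
/- Let L be a positive even integer and let B be a Binomial(L, 1/2) random variable. Then for every integer t with 0 < t ≤ L/8, P(B ≥ L/2 + t) ≥ (1/15)·e^{−16t²/L}. -/
/-!
Write `L = 2m`. Consecutive binomial coefficients satisfy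
`C(2m, m+j+1) / C(2m, m+j) = (m-j)/(m+j+1) ≥ exp(-(4j+2)/m)`, so `C(2m, m+j) ≥ C(2m, m) e^{-2j²/m}`.
Summing over the window `m+t ≤ k ≤ m+t+d` with `d = ⌊√m/2⌋` gives `d+1 ≥ √m/2` terms, each at least
`C(2m, m) e^{-2(t+d)²/m} ≥ C(2m, m) e^{-8t²/m - 1}` since `2(t+d)² ≤ 4t² + 4d² ≤ 8t² + m`,
while `C(2m, m) ≥ 4^m/(2√m)`. Altogether `Σ_{k ≥ m+t} C(2m, k) ≥ 4^m e^{-1}/4 · e^{-8t²/m}`,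
and `e < 15/4`.
-/

open Finset

namespace Nat

theorem four_pow_sq_le_mul_centralBinom_sq {n : ℕ} (hn : 0 < n) :
    (4 ^ n) ^ 2 ≤ 4 * n * n.centralBinom ^ 2 := by
  induction n, hn using Nat.le_induction with
  | base => decide
  | succ n hn ih =>
    have hrec := succ_mul_centralBinom_succ n
    refine le_of_mul_le_mul_right ?_ n.succ_pos
    calc (4 ^ (n + 1)) ^ 2 * (n + 1) = 16 * (4 ^ n) ^ 2 * (n + 1) := by ring
      _ ≤ 16 * (4 * n * n.centralBinom ^ 2) * (n + 1) := by gcongr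
      _ ≤ 4 * (2 * (2 * n + 1) * n.centralBinom) ^ 2 := by
        nlinarith [Nat.zero_le (n.centralBinom ^ 2)]
      _ = 4 * (n + 1) * (n + 1).centralBinom ^ 2 * (n + 1) := by rw [← hrec]; ring

theorem four_pow_le_two_mul_mul_centralBinom {n s : ℕ} (hn : 0 < n) (hs : n ≤ s ^ 2) :
    4 ^ n ≤ 2 * s * n.centralBinom := by
  refine (Nat.pow_le_pow_iff_left two_ne_zero).1 ?_
  calc (4 ^ n) ^ 2 ≤ 4 * n * n.centralBinom ^ 2 := four_pow_sq_le_mul_centralBinom_sq hn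
    _ ≤ 4 * s ^ 2 * n.centralBinom ^ 2 := by gcongr
    _ = (2 * s * n.centralBinom) ^ 2 := by ring

theorem choose_mul_exp_le_choose_succ {m j : ℕ} (hm : 0 < m) (hj : 2 * j ≤ m) :
    ((2 * m).choose (m + j) : ℝ) * Real.exp (-(4 * j + 2) / m) ≤ (2 * m).choose (m + j + 1) := by
  have hm' : (0 : ℝ) < m := by exact_mod_cast hm
  have hj' : (2 * j : ℝ) ≤ m := by exact_mod_cast hj
  have hrec : ((2 * m).choose (m + j + 1) : ℝ) * (m + j + 1) =
      (2 * m).choose (m + j) * (m - j) := by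
    have h := congrArg (Nat.cast : ℕ → ℝ) (choose_succ_right_eq (2 * m) (m + j))
    push_cast [show 2 * m - (m + j) = m - j by omega, Nat.cast_sub (by omega : j ≤ m)] at h
    exact h
  have hexp : Real.exp (-(4 * j + 2) / m) * (m + 4 * j + 2) ≤ m := by
    rw [neg_div, Real.exp_neg, inv_mul_le_iff₀ (Real.exp_pos _)]
    calc (m : ℝ) + 4 * j + 2 = m * ((4 * j + 2) / m + 1) := by field_simp; ring
      _ ≤ m * Real.exp ((4 * j + 2) / m) := by gcongr; exact Real.add_one_le_exp _
      _ = Real.exp ((4 * j + 2) / m) * m := mul_comm _ _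
  -- `m (m + j + 1) ≤ (m - j) (m + 4j + 2)` is `0 ≤ (2j + 1) (m - 2j)`
  have hfactor : Real.exp (-(4 * j + 2) / m) * (m + j + 1) ≤ m - j := by
    refine le_of_mul_le_mul_right ?_ (by positivity : (0 : ℝ) < m + 4 * j + 2)
    nlinarith [Real.exp_pos (-(4 * j + 2) / m)]
  calc ((2 * m).choose (m + j) : ℝ) * Real.exp (-(4 * j + 2) / m)
      = (2 * m).choose (m + j) * (Real.exp (-(4 * j + 2) / m) * (m + j + 1)) / (m + j + 1) := by
        field_simp
    _ ≤ (2 * m).choose (m + j) * (m - j) / (m + j + 1) := by gcongr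
    _ = (2 * m).choose (m + j + 1) := by rw [← hrec]; field_simp

theorem choose_mul_exp_le_choose {m j : ℕ} (hm : 0 < m) (hj : 2 * j ≤ m + 2) :
    ((2 * m).choose m : ℝ) * Real.exp (-(2 * j ^ 2) / m) ≤ (2 * m).choose (m + j) := by
  induction j with
  | zero => simp
  | succ j ih =>
    have hsplit : Real.exp (-(2 * ((j + 1 : ℕ) : ℝ) ^ 2) / m) =
        Real.exp (-(2 * j ^ 2) / m) * Real.exp (-(4 * j + 2) / m) := by
      rw [← Real.exp_add]; push_cast; ring_nf
    rw [hsplit, ← mul_assoc]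
    calc _ ≤ ((2 * m).choose (m + j) : ℝ) * Real.exp (-(4 * j + 2) / m) := by
          gcongr; exact ih (by omega)
      _ ≤ _ := choose_mul_exp_le_choose_succ hm (by omega)

theorem card_mul_exp_le_sum_choose {m t d : ℕ} (hm : 0 < m) (htd : 2 * (t + d) ≤ m) :
    (d + 1 : ℝ) * (2 * m).choose m * Real.exp (-(2 * (t + d : ℕ) ^ 2) / m) ≤
      ∑ k ∈ Icc (m + t) (2 * m), ((2 * m).choose k : ℝ) := by
  have hterm : ∀ k ∈ Icc (m + t) (m + (t + d)),
      ((2 * m).choose m : ℝ) * Real.exp (-(2 * (t + d : ℕ) ^ 2) / m) ≤ (2 * m).choose k := by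
    intro k hk
    obtain ⟨j, rfl⟩ : ∃ j, k = m + j := ⟨k - m, by grind⟩
    have hj : j ≤ t + d := by grind
    calc ((2 * m).choose m : ℝ) * Real.exp (-(2 * (t + d : ℕ) ^ 2) / m)
        ≤ (2 * m).choose m * Real.exp (-(2 * j ^ 2) / m) := by gcongr
      _ ≤ _ := choose_mul_exp_le_choose hm (by omega)
  have hcard : #(Icc (m + t) (m + (t + d))) = d + 1 := by simp; omega
  calc (d + 1 : ℝ) * (2 * m).choose m * Real.exp (-(2 * (t + d : ℕ) ^ 2) / m)
      ≤ ∑ k ∈ Icc (m + t) (m + (t + d)), ((2 * m).choose k : ℝ) := by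
        simpa [hcard, mul_assoc] using card_nsmul_le_sum _ _ _ hterm
    _ ≤ _ := sum_le_sum_of_subset_of_nonneg (Icc_subset_Icc_right (by omega)) (by simp)

theorem exists_four_mul_sq_le_lt (m : ℕ) : ∃ d, 4 * d ^ 2 ≤ m ∧ m < 4 * (d + 1) ^ 2 := by
  refine ⟨sqrt m / 2, ?_, ?_⟩
  · have := Nat.pow_le_pow_left (show 2 * (sqrt m / 2) ≤ sqrt m by omega) 2
    linarith [sqrt_le' m]
  · have := lt_succ_sqrt' m
    have : sqrt m + 1 ≤ 2 * (sqrt m / 2 + 1) := by omega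
    nlinarith

theorem four_pow_mul_exp_le_sum_choose {m t : ℕ} (hm : 0 < m) (ht : 4 * t ≤ m) :
    (4 : ℝ) ^ m * Real.exp (-(8 * t ^ 2 / m) - 1) ≤
      4 * ∑ k ∈ Icc (m + t) (2 * m), ((2 * m).choose k : ℝ) := by
  obtain ⟨d, hd_le, hd_lt⟩ := exists_four_mul_sq_le_lt m
  have hcentral : (4 : ℝ) ^ m ≤ 4 * (d + 1) * (2 * m).choose m := by
    have := four_pow_le_two_mul_mul_centralBinom hm (s := 2 * (d + 1)) (by nlinarith)
    rw [centralBinom_eq_two_mul_choose] at this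
    exact_mod_cast (by linarith : 4 ^ m ≤ 4 * (d + 1) * (2 * m).choose m)
  have hexp : Real.exp (-(8 * t ^ 2 / m) - 1) ≤ Real.exp (-(2 * (t + d : ℕ) ^ 2) / m) := by
    have hm' : (0 : ℝ) < m := by exact_mod_cast hm
    have hd' : (4 * d ^ 2 : ℝ) ≤ m := by exact_mod_cast hd_le
    gcongr
    rw [neg_div, ← sub_nonneg]
    field_simp
    push_cast
    nlinarith [sq_nonneg ((t : ℝ) - d)]
  calc (4 : ℝ) ^ m * Real.exp (-(8 * t ^ 2 / m) - 1)
      ≤ 4 * (d + 1) * (2 * m).choose m * Real.exp (-(2 * (t + d : ℕ) ^ 2) / m) := by gcongr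
    _ ≤ _ := by
      rw [mul_assoc 4, mul_assoc 4]
      gcongr
      exact card_mul_exp_le_sum_choose hm (by nlinarith)

end Nat

theorem stmt_16_general (L : ℕ) (hEven : Even L) (hLpos : 0 < L) (t : ℕ)
    (ht8 : 8 * t ≤ L) :
    (1 / 15 : ℝ) * Real.exp (-(16 * (t : ℝ) ^ 2 / L)) ≤
      (∑ k ∈ Finset.Icc (L / 2 + t) L, (L.choose k : ℝ)) / 2 ^ L := by
  obtain ⟨m, rfl⟩ := hEven.two_dvd
  have hm : 0 < m := by omega
  have htail := Nat.four_pow_mul_exp_le_sum_choose hm (t := t) (by omega)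
  have he : (4 / 15 : ℝ) ≤ Real.exp (-1) := by
    rw [Real.exp_neg, le_inv_comm₀ (by norm_num) (Real.exp_pos 1)]
    linarith [Real.exp_one_lt_d9]
  have hexponent : (16 * (t : ℝ) ^ 2 / (2 * m : ℕ)) = 8 * t ^ 2 / m := by
    push_cast; field_simp; ring
  rw [show 2 * m / 2 = m by omega, le_div_iff₀ (by positivity), pow_mul, hexponent]
  rw [sub_eq_add_neg, Real.exp_add] at htail
  calc 1 / 15 * Real.exp (-(8 * t ^ 2 / m)) * ((2 : ℝ) ^ 2) ^ m
      = 4 / 15 * (4 ^ m * Real.exp (-(8 * t ^ 2 / m))) / 4 := by norm_num; ring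
    _ ≤ Real.exp (-1) * (4 ^ m * Real.exp (-(8 * t ^ 2 / m))) / 4 := by gcongr
    _ ≤ _ := by linarith

/-- Proposition 3 of the paper, adapted from Proposition 7.3.2 of
Alon–Spencer. For `B ~ Binomial(L, 1/2)` with `L` a positive even integer, and any integer
`t` with `0 < t ≤ L/8`,
`P(B ≥ L/2 + t) = (Σ_{k=L/2+t}^{L} C(L,k)) / 2^L ≥ (1/15)·e^{−16t²/L}`. -/
theorem stmt_16 (L : ℕ) (hEven : Even L) (hLpos : 0 < L) (t : ℕ) (ht : 0 < t)
    (ht8 : 8 * t ≤ L) :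
    (1 / 15 : ℝ) * Real.exp (-(16 * (t : ℝ) ^ 2 / L)) ≤
      (∑ k ∈ Finset.Icc (L / 2 + t) L, (L.choose k : ℝ)) / 2 ^ L :=
  stmt_16_general L hEven hLpos t ht8
end

section
/- Let B and N be independent random variables with B ≥ 0, N ≥ 0, means μ_B = E[B] > 0 and μ_N = E[N] > 0. Suppose c > 0 satisfies δ₀ := min{ P(B ≥ μ_B + c), P(B ≤ μ_B − c), P(N ≥ μ_N + c/2), P(N ≤ μ_N − c/2) } > 0. Then for every Δ with 0 < Δ ≤ c(μ_B + μ_N)/(μ_N(μ_N + c/2)), taking ε = c/2 and δ = δ₀², one has P(B − N(μ_B/μ_N + Δ/2) ≥ ε) ≥ δ and P(B − N(μ_B/μ_N − Δ/2) ≤ −ε) ≥ δ. -/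
open MeasureTheory ProbabilityTheory

/-! On the event `{B ≥ μ_B + c} ∩ {N ≤ μ_N − c/2}` the drift with `α = μ_B/μ_N + Δ/2` is at
least `c/2`, and on `{B ≤ μ_B − c} ∩ {N ≥ μ_N + c/2}` the drift with `α = μ_B/μ_N − Δ/2` is at
most `−c/2`; this is elementary algebra once `α ≥ 0`, which in the second case needs `c ≤ μ_B`
(forced by `B ≥ 0` and `P(B ≤ μ_B − c) > 0`). By independence each event has probability at
least `δ₀²`. -/

lemma nonneg_of_ae_nonneg_of_measure_le_ne_zero {Ω : Type*} [MeasurableSpace Ω]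
    {μ : Measure Ω} {X : Ω → ℝ} (hX : ∀ᵐ ω ∂μ, 0 ≤ X ω) {a : ℝ}
    (ha : μ {ω | X ω ≤ a} ≠ 0) : 0 ≤ a := by
  by_contra! h
  refine ha (measure_mono_null (fun ω (hω : X ω ≤ a) => ?_) (ae_iff.mp hX))
  exact fun h0 => by linarith

lemma ProbabilityTheory.IndepFun.sq_le_measure_of_preimage_inter_subset {Ω β γ : Type*}
    [MeasurableSpace Ω] [MeasurableSpace β] [MeasurableSpace γ] {μ : Measure Ω} [IsFiniteMeasure μ]
    {X : Ω → β} {Y : Ω → γ} (hXY : IndepFun X Y μ) {s : Set β} {t : Set γ}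
    (hs : MeasurableSet s) (ht : MeasurableSet t) {S : Set Ω} (hsub : X ⁻¹' s ∩ Y ⁻¹' t ⊆ S)
    {d : ℝ} (hd : 0 ≤ d) (hdX : d ≤ (μ (X ⁻¹' s)).toReal) (hdY : d ≤ (μ (Y ⁻¹' t)).toReal) :
    d ^ 2 ≤ (μ S).toReal :=
  calc d ^ 2 ≤ (μ (X ⁻¹' s)).toReal * (μ (Y ⁻¹' t)).toReal := by
        rw [sq]; exact mul_le_mul hdX hdY hd ENNReal.toReal_nonneg
    _ = (μ (X ⁻¹' s ∩ Y ⁻¹' t)).toReal := by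
        rw [hXY.measure_inter_preimage_eq_mul _ _ hs ht, ENNReal.toReal_mul]
    _ ≤ (μ S).toReal := ENNReal.toReal_mono (measure_ne_top _ _) (measure_mono hsub)

section Drift

variable {a m c Δ b n : ℝ}

lemma half_le_sub_mul_div_add_half (ha : 0 ≤ a) (hm : 0 < m) (hc : 0 < c) (hΔ : 0 < Δ)
    (hΔle : Δ * (m * (m + c / 2)) ≤ c * (a + m)) (hb : a + c ≤ b) (hn : n ≤ m - c / 2) :
    c / 2 ≤ b - n * (a / m + Δ / 2) := by
  have hα : 0 ≤ a / m + Δ / 2 := by positivity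
  have hma : m * (a / m) = a := by field_simp
  nlinarith [mul_le_mul_of_nonneg_right hn hα, mul_pos hΔ hm,
    mul_nonneg (div_nonneg ha hm.le) hc.le]

lemma sub_mul_div_sub_half_le_neg_half (ha : c ≤ a) (hm : 0 < m) (hc : 0 < c)
    (hΔle : Δ * (m * (m + c / 2)) ≤ c * (a + m)) (hb : b ≤ a - c) (hn : m + c / 2 ≤ n) :
    b - n * (a / m - Δ / 2) ≤ -(c / 2) := by
  have hα : 0 ≤ a / m - Δ / 2 := by
    rw [sub_nonneg, div_le_div_iff₀ two_pos hm]
    nlinarith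
  have hma : m * (a / m) = a := by field_simp
  nlinarith [mul_le_mul_of_nonneg_right hn hα,
    mul_nonneg (div_nonneg (hc.le.trans ha) hm.le) hc.le]

end Drift

theorem stmt_17_general
    {Ω : Type*} [MeasurableSpace Ω] (μ : Measure Ω) [IsProbabilityMeasure μ]
    (B N : Ω → ℝ)
    (hBnn : ∀ᵐ ω ∂μ, 0 ≤ B ω)
    (hInd : IndepFun B N μ)
    (muB muN : ℝ)
    (hmuNpos : 0 < muN)
    (c : ℝ) (hc : 0 < c)
    (δ0 : ℝ)
    (hδ0 : δ0 = min
      (min ((μ {ω | muB + c ≤ B ω}).toReal) ((μ {ω | B ω ≤ muB - c}).toReal))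
      (min ((μ {ω | muN + c / 2 ≤ N ω}).toReal) ((μ {ω | N ω ≤ muN - c / 2}).toReal)))
    (hδ0pos : 0 < δ0) :
    ∀ Δ : ℝ, 0 < Δ → Δ ≤ c * (muB + muN) / (muN * (muN + c / 2)) →
      δ0 ^ 2 ≤ (μ {ω | c / 2 ≤ B ω - N ω * (muB / muN + Δ / 2)}).toReal ∧
      δ0 ^ 2 ≤ (μ {ω | B ω - N ω * (muB / muN - Δ / 2) ≤ -(c / 2)}).toReal := by
  obtain ⟨⟨hδBhigh, hδBlow⟩, hδNhigh, hδNlow⟩ := by simpa only [le_min_iff] using hδ0.le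
  have hcB : c ≤ muB := sub_nonneg.mp <| nonneg_of_ae_nonneg_of_measure_le_ne_zero hBnn
    fun h => by simp only [h, ENNReal.toReal_zero] at hδBlow; linarith
  intro Δ hΔ hΔle
  rw [le_div_iff₀ (by positivity)] at hΔle
  constructor
  · refine hInd.sq_le_measure_of_preimage_inter_subset measurableSet_Ici measurableSet_Iic
      (fun ω ⟨hB, hN⟩ => ?_) hδ0pos.le hδBhigh hδNlow
    exact half_le_sub_mul_div_add_half (hc.le.trans hcB) hmuNpos hc hΔ hΔle hB hN
  · refine hInd.sq_le_measure_of_preimage_inter_subset measurableSet_Iic measurableSet_Ici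
      (fun ω ⟨hB, hN⟩ => ?_) hδ0pos.le hδBlow hδNhigh
    exact sub_mul_div_sub_half_le_neg_half hcB hmuNpos hc hΔle hB hN

/-- Proposition 4 of the paper. Let `B, N` be independent nonnegative
random variables with means `μ_B, μ_N > 0` and suppose
`δ₀ = min{P(B ≥ μ_B + c), P(B ≤ μ_B − c), P(N ≥ μ_N + c/2), P(N ≤ μ_N − c/2)} > 0`
for some `c > 0`.  Then for every `0 < Δ ≤ c(μ_B + μ_N)/(μ_N(μ_N + c/2))`, taking
`ε = c/2` and `δ = δ₀²`, the two Bang-Bang drift conditions hold: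
`P(B − N(μ_B/μ_N + Δ/2) ≥ ε) ≥ δ` and `P(B − N(μ_B/μ_N − Δ/2) ≤ −ε) ≥ δ`. -/
theorem stmt_17
    {Ω : Type*} [MeasurableSpace Ω] (μ : Measure Ω) [IsProbabilityMeasure μ]
    (B N : Ω → ℝ) (hBmeas : Measurable B) (hNmeas : Measurable N)
    (hBnn : ∀ᵐ ω ∂μ, 0 ≤ B ω) (hNnn : ∀ᵐ ω ∂μ, 0 ≤ N ω)
    (hInd : IndepFun B N μ)
    (hBint : Integrable B μ) (hNint : Integrable N μ)
    (muB muN : ℝ) (hmuB : muB = ∫ ω, B ω ∂μ) (hmuN : muN = ∫ ω, N ω ∂μ)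
    (hmuBpos : 0 < muB) (hmuNpos : 0 < muN)
    (c : ℝ) (hc : 0 < c)
    (δ0 : ℝ)
    (hδ0 : δ0 = min
      (min ((μ {ω | muB + c ≤ B ω}).toReal) ((μ {ω | B ω ≤ muB - c}).toReal))
      (min ((μ {ω | muN + c / 2 ≤ N ω}).toReal) ((μ {ω | N ω ≤ muN - c / 2}).toReal)))
    (hδ0pos : 0 < δ0) :
    ∀ Δ : ℝ, 0 < Δ → Δ ≤ c * (muB + muN) / (muN * (muN + c / 2)) →
      δ0 ^ 2 ≤ (μ {ω | c / 2 ≤ B ω - N ω * (muB / muN + Δ / 2)}).toReal ∧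
      δ0 ^ 2 ≤ (μ {ω | B ω - N ω * (muB / muN - Δ / 2) ≤ -(c / 2)}).toReal :=
  stmt_17_general μ B N hBnn hInd muB muN hmuNpos c hc δ0 hδ0 hδ0pos
end
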